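/- Let y ~ N(ȳ, Σ_y) be a d-dimensional Gaussian with Σ_y positive definite, let σ ∈ ℝ^d be the vector of positive square roots of the diagonal entries of Σ_y, and let β ∈ (0,1). If ȳᵢ + Ψ_d⁻¹(β)·σᵢ ≤ 0 for every coordinate i, where Ψ_d⁻¹(β) = √(Φ_d⁻¹(1−β)) and Φ_d⁻¹ is the chi-squared quantile function with d degrees of freedom, then P(yᵢ ≤ 0 for all i) ≥ 1−β. -/

import Mathlib

/-!
Write `y = ȳ + A z` with `z` standard Gaussian on `ℝ^d` and `A` the symmetric square root of
`Σ_y`. By Cauchy–Schwarz, `(A z)ᵢ ≤ ‖Aᵢ‖ ‖z‖ = σᵢ ‖z‖`, so the event `‖z‖² ≤ Φ_d⁻¹(1 - β)` forces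
`yᵢ ≤ ȳᵢ + Ψ_d⁻¹(β) σᵢ ≤ 0` for every `i`. That event has probability exactly `1 - β`, because
`‖z‖²` is `χ²_d`-distributed, i.e. follows the gamma law `Γ(d/2, 1/2)`, whose CDF is continuous.
The chi-squared law comes from polar coordinates: the density `(2π)^(-d/2) e^(-‖x‖²/2)` of `z`
(identified through its characteristic function) is radial, and the substitution `s = r²` turns
`d ⋅ vol(B) ⋅ r^(d-1) (2π)^(-d/2) e^(-r²/2) dr` into the gamma density.
-/

open MeasureTheory ProbabilityTheory Matrix Real

noncomputable def mvGaussian {d : ℕ} (m : Fin d → ℝ) (S : Matrix (Fin d) (Fin d) ℝ)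
    (hS : S.PosDef) : Measure (Fin d → ℝ) :=
  (Measure.pi fun _ : Fin d => gaussianReal 0 1).map
    (fun z => m + (hS.posSemidef.1.eigenvectorUnitary.1 *
      diagonal ((RCLike.ofReal : ℝ → ℝ) ∘ (√·) ∘ hS.posSemidef.1.eigenvalues) *
      (star hS.posSemidef.1.eigenvectorUnitary : Matrix (Fin d) (Fin d) ℝ)).mulVec z)

noncomputable def stdNormalCDF (x : ℝ) : ℝ := cdf (gaussianReal 0 1) x

noncomputable def stdNormalQuantile (p : ℝ) : ℝ := Function.invFun stdNormalCDF p

noncomputable def chiSqCDF (d : ℕ) (x : ℝ) : ℝ := cdf (gammaMeasure (d / 2) (1 / 2)) x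

noncomputable def chiSqQuantile (d : ℕ) (p : ℝ) : ℝ := Function.invFun (chiSqCDF d) p

noncomputable def PsiInv (d : ℕ) (β : ℝ) : ℝ := Real.sqrt (chiSqQuantile d (1 - β))

noncomputable def Psi (d : ℕ) (r : ℝ) : ℝ := 1 - chiSqCDF d (r ^ 2)

noncomputable def lambdaMax {d : ℕ} (S : Matrix (Fin d) (Fin d) ℝ) (hS : S.IsHermitian) : ℝ :=
  ⨆ i, hS.eigenvalues i

noncomputable def regIncBeta (a b x : ℝ) : ℝ :=
  (∫ t in (0:ℝ)..x, t ^ (a - 1) * (1 - t) ^ (b - 1)) /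
    (∫ t in (0:ℝ)..1, t ^ (a - 1) * (1 - t) ^ (b - 1))

noncomputable def calI (d : ℕ) (x : ℝ) : ℝ :=
  regIncBeta ((d - 1 : ℝ) / 2) (1 / 2) (Real.sqrt (1 - x))

open Set Module
open scoped MatrixOrder InnerProductSpace

lemma continuous_cdf (μ : Measure ℝ) [IsProbabilityMeasure μ] [NullSingletonClass μ] :
    Continuous (cdf μ) := by
  refine continuous_iff_continuousAt.2 fun x => ?_
  rw [(cdf μ).mono.continuousAt_iff_leftLim_eq_rightLim, StieltjesFunction.rightLim_eq]
  have h := (cdf μ).measure_singleton x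
  rw [measure_cdf, measure_singleton, eq_comm, ENNReal.ofReal_eq_zero, sub_nonpos] at h
  exact le_antisymm ((cdf μ).mono.leftLim_le le_rfl) h

lemma exists_cdf_eq (μ : Measure ℝ) [IsProbabilityMeasure μ] [NullSingletonClass μ] {p : ℝ}
    (hp : p ∈ Ioo 0 1) : ∃ x, cdf μ x = p :=
  mem_range_of_exists_le_of_exists_ge (continuous_cdf μ)
    ((tendsto_cdf_atBot μ).eventually (eventually_le_nhds hp.1)).exists
    ((tendsto_cdf_atTop μ).eventually (eventually_ge_nhds hp.2)).exists

lemma chiSqCDF_chiSqQuantile {d : ℕ} (hd : 0 < d) {p : ℝ} (hp : p ∈ Ioo 0 1) :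
    chiSqCDF d (chiSqQuantile d p) = p := by
  have := isProbabilityMeasure_gammaMeasure (a := d / 2) (r := 1 / 2) (by positivity) (by norm_num)
  have : NullSingletonClass (gammaMeasure (d / 2) (1 / 2)) := by
    unfold gammaMeasure; infer_instance
  exact Function.invFun_eq (exists_cdf_eq _ hp)

lemma integral_gammaMeasure {a r : ℝ} (ha : 0 < a) (hr : 0 < r) (f : ℝ → ℝ) :
    ∫ s, f s ∂gammaMeasure a r = ∫ s in Ioi 0, gammaPDFReal a r s * f s := by
  rw [gammaMeasure, integral_withDensity_eq_integral_toReal_smul (f := gammaPDF a r)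
    (measurable_gammaPDFReal a r).ennreal_ofReal (ae_of_all _ fun _ => ENNReal.ofReal_lt_top),
    ← integral_Ici_eq_integral_Ioi, ← setIntegral_eq_integral_of_forall_compl_eq_zero]
  · refine setIntegral_congr_fun measurableSet_Ici fun s _ => ?_
    rw [gammaPDF, ENNReal.toReal_ofReal (gammaPDFReal_nonneg ha hr s), smul_eq_mul]
  · intro s hs
    simp [gammaPDF_of_neg (not_le.mp hs)]

lemma two_mul_gammaPDFReal_sq {n : ℕ} (hn : 0 < n) {y : ℝ} (hy : 0 < y) :
    2 * y * gammaPDFReal (n / 2) (1 / 2) (y ^ 2) =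
      n * (√π ^ n / Gamma (n / 2 + 1)) * y ^ (n - 1) *
        ((2 * π) ^ (-(n : ℝ) / 2) * rexp (-y ^ 2 / 2)) := by
  have hn2 : (0 : ℝ) < n / 2 := by positivity
  have hpow : y * (y ^ 2) ^ ((n : ℝ) / 2 - 1) = y ^ (n - 1) := by
    rw [← rpow_natCast y (n - 1), Nat.cast_sub hn, ← rpow_natCast y 2, ← rpow_mul hy.le,
      mul_comm, ← rpow_add_one hy.ne']
    push_cast
    ring_nf
  have hconst : √π ^ n * (2 * π) ^ (-(n : ℝ) / 2) = (1 / 2) ^ ((n : ℝ) / 2) := by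
    rw [sqrt_eq_rpow, ← rpow_natCast, ← rpow_mul pi_pos.le, mul_rpow (by norm_num) pi_pos.le,
      neg_div, rpow_neg (by positivity), rpow_neg pi_pos.le,
      div_rpow (by norm_num) (by norm_num), one_rpow, show (1 : ℝ) / 2 * n = n / 2 by ring]
    have : 0 < π ^ ((n : ℝ) / 2) := by positivity
    field_simp
  rw [gammaPDFReal, if_pos (by positivity), Gamma_add_one hn2.ne', ← hpow, ← hconst]
  have := Gamma_pos_of_pos hn2
  field_simp

section StdGaussian

variable {E : Type*} [NormedAddCommGroup E] [InnerProductSpace ℝ E]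

variable (E) in
noncomputable def stdGaussianPDFReal (x : E) : ℝ :=
  (2 * π) ^ (-(finrank ℝ E : ℝ) / 2) * rexp (-‖x‖ ^ 2 / 2)

lemma stdGaussianPDFReal_nonneg (x : E) : 0 ≤ stdGaussianPDFReal E x := by
  unfold stdGaussianPDFReal; positivity

variable [FiniteDimensional ℝ E] [MeasurableSpace E] [BorelSpace E]

lemma integral_stdGaussianPDFReal : ∫ x, stdGaussianPDFReal E x = 1 := by
  have h := GaussianFourier.integral_rexp_neg_mul_sq_norm (V := E) (b := 1 / 2) (by norm_num)
  have hexp : (fun x : E => rexp (-‖x‖ ^ 2 / 2)) = fun x => rexp (-(1 / 2) * ‖x‖ ^ 2) := by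
    ext; ring_nf
  simp only [stdGaussianPDFReal]
  rw [integral_const_mul, hexp, h, show π / (1 / 2) = 2 * π by ring,
    neg_div, rpow_neg (by positivity), inv_mul_cancel₀ (by positivity)]

lemma integrable_stdGaussianPDFReal : Integrable (stdGaussianPDFReal E) :=
  Integrable.of_integral_ne_zero (by rw [integral_stdGaussianPDFReal]; exact one_ne_zero)

open Complex in
lemma stdGaussian_eq_withDensity :
    stdGaussian E = volume.withDensity fun x => ENNReal.ofReal (stdGaussianPDFReal E x) := by
  have : IsProbabilityMeasure
      (volume.withDensity fun x => ENNReal.ofReal (stdGaussianPDFReal E x)) := by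
    constructor
    rw [withDensity_apply _ MeasurableSet.univ, Measure.restrict_univ,
      ← ofReal_integral_eq_lintegral_ofReal integrable_stdGaussianPDFReal
        (ae_of_all _ stdGaussianPDFReal_nonneg), integral_stdGaussianPDFReal, ENNReal.ofReal_one]
  refine Measure.ext_of_charFun (funext fun t => ?_)
  rw [charFun_stdGaussian, charFun_apply, integral_withDensity_eq_integral_toReal_smul
    (by unfold stdGaussianPDFReal; fun_prop) (ae_of_all _ fun x => ENNReal.ofReal_lt_top)]
  set c : ℝ := (2 * π) ^ (-(finrank ℝ E : ℝ) / 2) with hc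
  have hx (x : E) : (ENNReal.ofReal (stdGaussianPDFReal E x)).toReal • cexp (⟪x, t⟫_ℝ * I)
      = c * cexp (-(1 / 2 : ℂ) * ‖x‖ ^ 2 + I * ⟪t, x⟫_ℝ) := by
    rw [ENNReal.toReal_ofReal (stdGaussianPDFReal_nonneg x), stdGaussianPDFReal, ← hc,
      Complex.real_smul, ofReal_mul, ofReal_exp, mul_assoc, ← Complex.exp_add, real_inner_comm]
    push_cast
    ring_nf
  simp_rw [hx]
  rw [integral_const_mul, GaussianFourier.integral_cexp_neg_mul_sq_norm_add (by norm_num), hc,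
    ofReal_cpow (by positivity), ← mul_assoc,
    show (π : ℂ) / (1 / 2) = ((2 * π : ℝ) : ℂ) by push_cast; ring,
    ← cpow_add _ _ (by exact_mod_cast (by positivity : (2 * π : ℝ) ≠ 0))]
  push_cast
  ring_nf
  rw [cpow_zero, I_sq]
  ring_nf

lemma integral_stdGaussianPDFReal_mul_comp_norm_sq (hE : 0 < finrank ℝ E) (f : ℝ → ℝ) :
    ∫ x, stdGaussianPDFReal E x * f (‖x‖ ^ 2) =
      ∫ s in Ioi 0, gammaPDFReal (finrank ℝ E / 2) (1 / 2) s * f s := by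
  have : Nontrivial E := finrank_pos_iff.mp hE
  have hball : volume.real (Metric.ball (0 : E) 1) =
      √π ^ finrank ℝ E / Gamma (finrank ℝ E / 2 + 1) := by
    rw [measureReal_def, InnerProductSpace.volume_ball, ENNReal.ofReal_one, one_pow, one_mul,
      ENNReal.toReal_ofReal (by positivity)]
  simp only [stdGaussianPDFReal]
  rw [integral_fun_norm_addHaar volume
      fun r => (2 * π) ^ (-(finrank ℝ E : ℝ) / 2) * rexp (-r ^ 2 / 2) * f (r ^ 2),
    ← integral_comp_rpow_Ioi_of_pos (g := fun s => gammaPDFReal (finrank ℝ E / 2) (1 / 2) s * f s)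
      two_pos, hball, nsmul_eq_mul, smul_eq_mul, ← integral_const_mul, ← integral_const_mul]
  refine setIntegral_congr_fun measurableSet_Ioi fun y (hy : 0 < y) => ?_
  simp only [smul_eq_mul, rpow_two, show (2 : ℝ) - 1 = 1 by norm_num, rpow_one]
  rw [← mul_assoc (2 * y), two_mul_gammaPDFReal_sq hE hy]
  ring

theorem map_norm_sq_stdGaussian (hE : 0 < finrank ℝ E) :
    (stdGaussian E).map (fun x => ‖x‖ ^ 2) = gammaMeasure (finrank ℝ E / 2) (1 / 2) := by
  have := isProbabilityMeasure_gammaMeasure (a := finrank ℝ E / 2) (r := 1 / 2)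
    (by positivity) (by norm_num)
  refine ext_of_forall_integral_eq_of_IsFiniteMeasure fun f => ?_
  rw [integral_map (by fun_prop) f.continuous.aestronglyMeasurable, stdGaussian_eq_withDensity,
    integral_withDensity_eq_integral_toReal_smul (by unfold stdGaussianPDFReal; fun_prop)
      (ae_of_all _ fun _ => ENNReal.ofReal_lt_top),
    integral_gammaMeasure (by positivity) (by norm_num),
    ← integral_stdGaussianPDFReal_mul_comp_norm_sq hE]
  simp_rw [ENNReal.toReal_ofReal (stdGaussianPDFReal_nonneg _), smul_eq_mul]

end StdGaussian

theorem map_sum_sq_pi_gaussianReal {ι : Type*} [Fintype ι] [Nonempty ι] :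
    (Measure.pi fun _ : ι => gaussianReal 0 1).map (fun z => ∑ i, z i ^ 2) =
      gammaMeasure (Fintype.card ι / 2) (1 / 2) := by
  have : (fun z : ι → ℝ => ∑ i, z i ^ 2) = (fun x => ‖x‖ ^ 2) ∘ WithLp.toLp 2 := by
    ext z; simp [EuclideanSpace.real_norm_sq_eq]
  rw [this, ← Measure.map_map (by fun_prop) (by fun_prop), map_pi_eq_stdGaussian,
    map_norm_sq_stdGaussian (by simp [Fintype.card_pos]), finrank_euclideanSpace]

lemma chiSqCDF_eq_pi_gaussianReal {d : ℕ} (hd : 0 < d) (x : ℝ) :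
    chiSqCDF d x = (Measure.pi fun _ : Fin d => gaussianReal 0 1).real {z | ∑ i, z i ^ 2 ≤ x} := by
  have : Nonempty (Fin d) := ⟨⟨0, hd⟩⟩
  have := isProbabilityMeasure_gammaMeasure (a := d / 2) (r := 1 / 2) (by positivity) (by norm_num)
  have hlaw := map_sum_sq_pi_gaussianReal (ι := Fin d)
  rw [Fintype.card_fin] at hlaw
  rw [chiSqCDF, cdf_eq_real, ← hlaw, map_measureReal_apply (by measurability) measurableSet_Iic]
  rfl

theorem Matrix.PosSemidef.cfc_sqrt_mul_self {n : Type*} [Fintype n] [DecidableEq n]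
    {S : Matrix n n ℝ} (hS : S.PosSemidef) : cfc Real.sqrt S * cfc Real.sqrt S = S := by
  rw [← cfc_mul .., cfc_congr (g := id), cfc_id ℝ S]
  exact fun x hx => Real.mul_self_sqrt (spectrum_nonneg_of_nonneg hS.nonneg hx)

lemma Matrix.transpose_cfc {n : Type*} [Fintype n] [DecidableEq n] (f : ℝ → ℝ)
    (S : Matrix n n ℝ) : (cfc f S)ᵀ = cfc f S := by
  simpa [IsSelfAdjoint, star_eq_conjTranspose] using (cfc_predicate f S : IsSelfAdjoint _)

lemma Matrix.mulVec_apply_le_of_mul_transpose_eq {m n : Type*} [Fintype n] {A : Matrix m n ℝ}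
    {S : Matrix m m ℝ} (hA : A * Aᵀ = S) (z : n → ℝ) (i : m) :
    (A *ᵥ z) i ≤ √(S i i) * √(∑ j, z j ^ 2) := by
  have hdiag : ∑ j, A i j ^ 2 = S i i := by simp [← hA, mul_apply, sq]
  simpa [mulVec, dotProduct, hdiag] using Real.sum_mul_le_sqrt_mul_sqrt Finset.univ (A i) z

lemma mvGaussian_eq_map {d : ℕ} (m : Fin d → ℝ) (S : Matrix (Fin d) (Fin d) ℝ) (hS : S.PosDef) :
    mvGaussian m S hS =
      (Measure.pi fun _ : Fin d => gaussianReal 0 1).map fun z => m + cfc Real.sqrt S *ᵥ z := by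
  rw [mvGaussian, hS.posSemidef.1.cfc_eq]
  rfl

instance isProbabilityMeasure_mvGaussian {d : ℕ} (m : Fin d → ℝ) (S : Matrix (Fin d) (Fin d) ℝ) (hS : S.PosDef) :
    IsProbabilityMeasure (mvGaussian m S hS) := by
  rw [mvGaussian_eq_map]
  exact Measure.isProbabilityMeasure_map (by fun_prop)

theorem stmt4 {d : ℕ} (ybar : Fin d → ℝ) (S : Matrix (Fin d) (Fin d) ℝ) (hS : S.PosDef)
    (β : ℝ) (hβ : β ∈ Set.Ioo (0:ℝ) 1)
    (hcon : ∀ i, ybar i + PsiInv d β * Real.sqrt (S i i) ≤ 0) :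
    1 - β ≤ ((mvGaussian ybar S hS) {v | ∀ i, v i ≤ 0}).toReal := by
  rcases Nat.eq_zero_or_pos d with rfl | hd
  · simp [hβ.1.le]
  set q := chiSqQuantile d (1 - β)
  set A := cfc Real.sqrt S
  have hA : A * Aᵀ = S := by rw [transpose_cfc, hS.posSemidef.cfc_sqrt_mul_self]
  have hball : {z : Fin d → ℝ | ∑ i, z i ^ 2 ≤ q} ⊆
      (fun z => ybar + A *ᵥ z) ⁻¹' {v | ∀ i, v i ≤ 0} := fun z (hz : _ ≤ q) i => calc
    ybar i + (A *ᵥ z) i ≤ ybar i + √(S i i) * √q := by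
      grw [mulVec_apply_le_of_mul_transpose_eq hA z i, hz]
    _ = ybar i + PsiInv d β * √(S i i) := by rw [PsiInv, mul_comm]
    _ ≤ 0 := hcon i
  calc 1 - β = chiSqCDF d q :=
        (chiSqCDF_chiSqQuantile hd ⟨by linarith [hβ.2], by linarith [hβ.1]⟩).symm
    _ = (Measure.pi fun _ => gaussianReal 0 1).real {z | ∑ i, z i ^ 2 ≤ q} :=
      chiSqCDF_eq_pi_gaussianReal hd q
    _ ≤ (mvGaussian ybar S hS).real {v | ∀ i, v i ≤ 0} := by
      rw [mvGaussian_eq_map, measureReal_def, measureReal_def]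
      exact ENNReal.toReal_mono (measure_ne_top _ _)
        ((measure_mono hball).trans (Measure.le_map_apply (by fun_prop) _))
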